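/- arXiv:0810.2114 — 12 statements merged into one kernel-verified Lean document; each statement's English description precedes it below -/
import Mathlib

section
/- Let G be a commutative group, f a bijection of G, and Q = G(f) the loop on the disjoint union G ∪ Ḡ with multiplication x*y = xy, x*ȳ = (xy)‾, x̄*y = (xy)‾, x̄*ȳ = f(xy). Then Q is a group if and only if f is a translation of G, i.e. f(x) = x·f(1) for all x ∈ G. -/
def gfMul {G : Type*} [CommGroup G] (f : G → G) : G ⊕ G → G ⊕ G → G ⊕ G
  | Sum.inl x, Sum.inl y => Sum.inl (x * y)
  | Sum.inl x, Sum.inr y => Sum.inr (x * y)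
  | Sum.inr x, Sum.inl y => Sum.inr (x * y)
  | Sum.inr x, Sum.inr y => Sum.inl (f (x * y))

section gfMul

variable {G : Type*} [CommGroup G] {f : G → G}

/-- Associativity on the triple `(x, 1̄, 1̄)` reads `f x = x * f 1`. -/
theorem apply_eq_mul_apply_one_of_gfMul_assoc
    (h : ∀ a b c : G ⊕ G, gfMul f (gfMul f a b) c = gfMul f a (gfMul f b c)) (x : G) :
    f x = x * f 1 := by
  simpa [gfMul] using h (Sum.inl x) (Sum.inr 1) (Sum.inr 1)

theorem gfMul_assoc_of_apply_eq_mul {k : G} (hk : ∀ x : G, f x = x * k) (a b c : G ⊕ G) :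
    gfMul f (gfMul f a b) c = gfMul f a (gfMul f b c) := by
  rcases a with x | x <;> rcases b with y | y <;> rcases c with z | z <;>
    simp only [gfMul, hk, Sum.inl.injEq, Sum.inr.injEq] <;> ac_rfl

end gfMul

theorem stmt_0_general {G : Type*} [CommGroup G] (f : G → G) :
    (∀ a b c : G ⊕ G, gfMul f (gfMul f a b) c = gfMul f a (gfMul f b c)) ↔
      (∀ x : G, f x = x * f 1) :=
  ⟨apply_eq_mul_apply_one_of_gfMul_assoc, gfMul_assoc_of_apply_eq_mul⟩

theorem stmt_0 {G : Type*} [CommGroup G] (f : G → G) (hf : Function.Bijective f) :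
    (∀ a b c : G ⊕ G, gfMul f (gfMul f a b) c = gfMul f a (gfMul f b c)) ↔
      (∀ x : G, f x = x * f 1) :=
  stmt_0_general f
end

section
/- Let G be a commutative group and f a bijection of G such that the loop Q = G(f) is not a group. Then the left nucleus of Q is contained in G, and it equals {x ∈ G : f(xy) = x·f(y) for all y ∈ G}. -/
/-!
An element `x̄` of the left nucleus gives `x̄ * (u'‾ * z) = (x̄ * u'‾) * z`, i.e. `f (u * z) = f u * z`
with `u = x u'`; hence `f` is the translation by `f 1` and `Q` is a group. So the left nucleus of a
non-associative `G(f)` lies in `G`, and for `x ∈ G` the single instance `x * (1̄ * ȳ) = (x * 1̄) * ȳ`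
of associativity already forces `f (x y) = x f(y)`, which in turn gives all the others.
-/

section GfLoop

variable {G : Type*} [CommGroup G] (f : G → G)

def gfLeftNucleus : Set (G ⊕ G) :=
  {a | ∀ b c : G ⊕ G, gfMul f a (gfMul f b c) = gfMul f (gfMul f a b) c}

variable {f}

theorem gfMul_assoc_of_eq_mul {t : G} (ht : ∀ u, f u = t * u) (a b c : G ⊕ G) :
    gfMul f (gfMul f a b) c = gfMul f a (gfMul f b c) := by
  cases a <;> cases b <;> cases c <;> simp [gfMul, ht, mul_assoc, mul_left_comm]

theorem inl_mem_gfLeftNucleus_iff {x : G} :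
    Sum.inl x ∈ gfLeftNucleus f ↔ ∀ y, f (x * y) = x * f y := by
  constructor
  · intro hx y
    have h := hx (Sum.inr 1) (Sum.inr y)
    simp only [gfMul, one_mul, mul_one, Sum.inl.injEq] at h
    exact h.symm
  · intro hx b c
    cases b <;> cases c <;> simp only [gfMul, Sum.inl.injEq, mul_assoc]
    exact (hx _).symm

theorem eq_mul_of_inr_mem_gfLeftNucleus {x : G} (hx : Sum.inr x ∈ gfLeftNucleus f) (u : G) :
    f u = f 1 * u := by
  have f_mul_right : ∀ u z : G, f (u * z) = f u * z := fun u z => by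
    have h := hx (Sum.inr (x⁻¹ * u)) (Sum.inl z)
    simpa only [gfMul, Sum.inl.injEq, mul_assoc, mul_inv_cancel_left] using h
  rw [← f_mul_right, one_mul]

end GfLoop

theorem stmt_1_general {G : Type*} [CommGroup G] (f : G → G)
    (hna : ¬ ∀ a b c : G ⊕ G, gfMul f (gfMul f a b) c = gfMul f a (gfMul f b c)) :
    {a : G ⊕ G | ∀ b c : G ⊕ G, gfMul f a (gfMul f b c) = gfMul f (gfMul f a b) c} =
      Sum.inl '' {x : G | ∀ y : G, f (x * y) = x * f y} := by
  change gfLeftNucleus f = _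
  ext a
  rcases a with x | x
  · rw [Sum.inl_injective.mem_set_image]
    exact inl_mem_gfLeftNucleus_iff
  · simp only [Set.mem_image, reduceCtorEq, and_false, exists_false, iff_false]
    exact fun hx => hna (gfMul_assoc_of_eq_mul (eq_mul_of_inr_mem_gfLeftNucleus hx))

theorem stmt_1 {G : Type*} [CommGroup G] (f : G → G) (hf : Function.Bijective f)
    (hna : ¬ ∀ a b c : G ⊕ G, gfMul f (gfMul f a b) c = gfMul f a (gfMul f b c)) :
    {a : G ⊕ G | ∀ b c : G ⊕ G, gfMul f a (gfMul f b c) = gfMul f (gfMul f a b) c} =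
      Sum.inl '' {x : G | ∀ y : G, f (x * y) = x * f y} :=
  stmt_1_general f hna
end

section
/- Let G be a commutative group and f₁, f₂ bijections of G such that neither G(f₁) nor G(f₂) is a group. If f₁ and f₂ are conjugate in Aut(G) (i.e., f₂ = ψ f₁ ψ⁻¹ for some automorphism ψ of G), then the loops G(f₁) and G(f₂) are isomorphic. -/
theorem gfMul_sumMap_mulEquiv {G H : Type*} [CommGroup G] [CommGroup H] (ψ : G ≃* H)
    {f₁ : G → G} {f₂ : H → H} (hψ : ∀ x, f₂ (ψ x) = ψ (f₁ x)) (a b : G ⊕ G) :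
    Sum.map ψ ψ (gfMul f₁ a b) = gfMul f₂ (Sum.map ψ ψ a) (Sum.map ψ ψ b) := by
  rcases a with a | a <;> rcases b with b | b <;>
    simp only [gfMul, Sum.map_inl, Sum.map_inr, ← map_mul, hψ]

theorem stmt_3_general {G : Type*} [CommGroup G] (f₁ f₂ : G → G)
    (ψ : G ≃* G) (hconj : ∀ x : G, f₂ x = ψ (f₁ (ψ.symm x))) :
    ∃ φ : (G ⊕ G) ≃ (G ⊕ G), ∀ a b : G ⊕ G,
      φ (gfMul f₁ a b) = gfMul f₂ (φ a) (φ b) :=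
  ⟨Equiv.sumCongr ψ.toEquiv ψ.toEquiv,
    gfMul_sumMap_mulEquiv ψ fun x => by rw [hconj, ψ.symm_apply_apply]⟩

theorem stmt_3 {G : Type*} [CommGroup G] (f₁ f₂ : G → G)
    (hf₁ : Function.Bijective f₁) (hf₂ : Function.Bijective f₂)
    (hna₁ : ¬ ∀ a b c : G ⊕ G, gfMul f₁ (gfMul f₁ a b) c = gfMul f₁ a (gfMul f₁ b c))
    (hna₂ : ¬ ∀ a b c : G ⊕ G, gfMul f₂ (gfMul f₂ a b) c = gfMul f₂ a (gfMul f₂ b c))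
    (ψ : G ≃* G) (hconj : ∀ x : G, f₂ x = ψ (f₁ (ψ.symm x))) :
    ∃ φ : (G ⊕ G) ≃ (G ⊕ G), ∀ a b : G ⊕ G,
      φ (gfMul f₁ a b) = gfMul f₂ (φ a) (φ b) :=
  stmt_3_general f₁ f₂ ψ hconj
end

section
/- Let G be a commutative group and f₁, f₂ bijections of G with f₁(1) = 1 = f₂(1), such that neither G(f₁) nor G(f₂) is a group. Then G(f₁) ≅ G(f₂) if and only if f₁ and f₂ are conjugate in Aut(G). -/
def IsMiddleNuclear {α : Type*} (mul : α → α → α) (b : α) : Prop :=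
  ∀ a c, mul (mul a b) c = mul a (mul b c)

theorem IsMiddleNuclear.map {α β : Type*} {mul₁ : α → α → α} {mul₂ : β → β → β} (φ : α ≃ β)
    (hφ : ∀ a b, φ (mul₁ a b) = mul₂ (φ a) (φ b)) {b : α} (hb : IsMiddleNuclear mul₁ b) :
    IsMiddleNuclear mul₂ (φ b) := by
  intro a c
  obtain ⟨a, rfl⟩ := φ.surjective a
  obtain ⟨c, rfl⟩ := φ.surjective c
  rw [← hφ, ← hφ, ← hφ, ← hφ, hb]

section gfMul

variable {G : Type*} [CommGroup G]

@[simp] theorem gfMul_inl_inl (f : G → G) (x y : G) :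
    gfMul f (.inl x) (.inl y) = .inl (x * y) := rfl

@[simp] theorem gfMul_inl_inr (f : G → G) (x y : G) :
    gfMul f (.inl x) (.inr y) = .inr (x * y) := rfl

@[simp] theorem gfMul_inr_inl (f : G → G) (x y : G) :
    gfMul f (.inr x) (.inl y) = .inr (x * y) := rfl

@[simp] theorem gfMul_inr_inr (f : G → G) (x y : G) :
    gfMul f (.inr x) (.inr y) = .inl (f (x * y)) := rfl

theorem gfMul_id_assoc (a b c : G ⊕ G) :
    gfMul id (gfMul id a b) c = gfMul id a (gfMul id b c) := by
  rcases a with a | a <;> rcases b with b | b <;> rcases c with c | c <;> simp [mul_assoc]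

theorem isMiddleNuclear_gfMul_inl (f : G → G) (y : G) :
    IsMiddleNuclear (gfMul f) (.inl y) := by
  rintro (a | a) (c | c) <;> simp [mul_assoc]

theorem eq_id_of_isMiddleNuclear_gfMul_inr {f : G → G} (hf : f 1 = 1) {y : G}
    (hy : IsMiddleNuclear (gfMul f) (.inr y)) : f = id := by
  funext x
  simpa [hf] using hy (.inl x) (.inr y⁻¹)

theorem gfMul_sumCongr (f₁ f₂ : G → G) (ψ : G ≃* G) (hψ : ∀ x, f₂ (ψ x) = ψ (f₁ x))
    (a b : G ⊕ G) :
    Equiv.sumCongr ψ.toEquiv ψ.toEquiv (gfMul f₁ a b) =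
      gfMul f₂ (Equiv.sumCongr ψ.toEquiv ψ.toEquiv a) (Equiv.sumCongr ψ.toEquiv ψ.toEquiv b) := by
  rcases a with a | a <;> rcases b with b | b <;> simp [← map_mul, hψ]

theorem exists_inl_eq_of_gfMul_iso {f₁ f₂ : G → G} (h₂ : f₂ 1 = 1)
    (hna₂ : ¬ ∀ a b c : G ⊕ G, gfMul f₂ (gfMul f₂ a b) c = gfMul f₂ a (gfMul f₂ b c))
    (φ : (G ⊕ G) ≃ (G ⊕ G)) (hφ : ∀ a b, φ (gfMul f₁ a b) = gfMul f₂ (φ a) (φ b)) (x : G) :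
    ∃ y, φ (.inl x) = .inl y := by
  have hx := (isMiddleNuclear_gfMul_inl f₁ x).map φ hφ
  rcases hφx : φ (.inl x) with y | y
  · exact ⟨y, rfl⟩
  · rw [hφx] at hx
    obtain rfl := eq_id_of_isMiddleNuclear_gfMul_inr h₂ hx
    exact absurd gfMul_id_assoc hna₂

theorem exists_mulEquiv_of_gfMul_iso {f₁ f₂ : G → G} (φ : (G ⊕ G) ≃ (G ⊕ G))
    (hφ : ∀ a b, φ (gfMul f₁ a b) = gfMul f₂ (φ a) (φ b))
    (hinl : ∀ x, ∃ y, φ (.inl x) = .inl y) :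
    ∃ (ψ : G ≃* G) (k : G), (∀ x, φ (.inl x) = .inl (ψ x)) ∧
      ∀ x, φ (.inr x) = .inr (ψ x * k) := by
  choose σ hσ using hinl
  have hmul (x y : G) : σ (x * y) = σ x * σ y := by
    simpa [hσ] using hφ (.inl x) (.inl y)
  have hinr (x : G) : φ (.inr x) = gfMul f₂ (.inl (σ x)) (φ (.inr 1)) := by
    simpa [hσ] using hφ (.inl x) (.inr 1)
  obtain ⟨k, hk⟩ : ∃ k, φ (.inr 1) = .inr k := by
    rcases h1 : φ (.inr 1) with a | k
    · obtain ⟨b, hb⟩ := φ.surjective (.inr 1)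
      rcases b with x | x <;> simp [hσ, hinr x, h1] at hb
    · exact ⟨k, rfl⟩
  have hinj : Function.Injective σ := fun x y h ↦
    Sum.inl_injective <| φ.injective <| by rw [hσ, hσ, h]
  have hsurj : Function.Surjective σ := fun y ↦ by
    obtain ⟨b, hb⟩ := φ.surjective (.inl y)
    rcases b with x | x
    · exact ⟨x, by simpa [hσ] using hb⟩
    · simp [hinr x, hk] at hb
  exact ⟨MulEquiv.ofBijective (MonoidHom.mk' σ hmul) ⟨hinj, hsurj⟩, k, hσ,
    fun x ↦ by rw [hinr x, hk]; rfl⟩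

end gfMul

theorem stmt_4_general {G : Type*} [CommGroup G] (f₁ f₂ : G → G)
    (hf₂ : Function.Bijective f₂)
    (h₁ : f₁ 1 = 1) (h₂ : f₂ 1 = 1)
    (hna₂ : ¬ ∀ a b c : G ⊕ G, gfMul f₂ (gfMul f₂ a b) c = gfMul f₂ a (gfMul f₂ b c)) :
    (∃ φ : (G ⊕ G) ≃ (G ⊕ G), ∀ a b : G ⊕ G,
        φ (gfMul f₁ a b) = gfMul f₂ (φ a) (φ b)) ↔
      (∃ ψ : G ≃* G, ∀ x : G, f₂ x = ψ (f₁ (ψ.symm x))) := by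
  constructor
  · rintro ⟨φ, hφ⟩
    obtain ⟨ψ, k, hl, hr⟩ :=
      exists_mulEquiv_of_gfMul_iso φ hφ (exists_inl_eq_of_gfMul_iso h₂ hna₂ φ hφ)
    have hconj (x : G) : f₂ (ψ x * k * k) = ψ (f₁ x) := by
      simpa [hl, hr, mul_assoc] using (hφ (.inr x) (.inr 1)).symm
    have hk : k * k = 1 := hf₂.injective (by simpa [h₁, h₂] using hconj 1)
    refine ⟨ψ, fun x ↦ ?_⟩
    simpa [mul_assoc, hk] using hconj (ψ.symm x)
  · rintro ⟨ψ, hψ⟩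
    exact ⟨_, gfMul_sumCongr f₁ f₂ ψ fun x ↦ by simpa using hψ (ψ x)⟩

theorem stmt_4 {G : Type*} [CommGroup G] (f₁ f₂ : G → G)
    (hf₁ : Function.Bijective f₁) (hf₂ : Function.Bijective f₂)
    (h₁ : f₁ 1 = 1) (h₂ : f₂ 1 = 1)
    (hna₁ : ¬ ∀ a b c : G ⊕ G, gfMul f₁ (gfMul f₁ a b) c = gfMul f₁ a (gfMul f₁ b c))
    (hna₂ : ¬ ∀ a b c : G ⊕ G, gfMul f₂ (gfMul f₂ a b) c = gfMul f₂ a (gfMul f₂ b c)) :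
    (∃ φ : (G ⊕ G) ≃ (G ⊕ G), ∀ a b : G ⊕ G,
        φ (gfMul f₁ a b) = gfMul f₂ (φ a) (φ b)) ↔
      (∃ ψ : G ≃* G, ∀ x : G, f₂ x = ψ (f₁ (ψ.symm x))) :=
  stmt_4_general f₁ f₂ hf₂ h₁ h₂ hna₂
end

section
/- Let G be a commutative group, f₂ an automorphism of G, t a square in G, and define f₁(x) = f₂(x)·t. If G(f₁) and G(f₂) are not groups, then G(f₁) is isomorphic to G(f₂). -/
section BarShift

variable {G : Type*} [CommGroup G]

def barShift (v : G) : G ⊕ G ≃ G ⊕ G :=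
  Equiv.sumCongr (Equiv.refl G) (Equiv.mulRight v)

theorem barShift_gfMul_mul_sq (f : G → G) (v : G) (a b : G ⊕ G) :
    barShift v (gfMul (fun x => f (x * v ^ 2)) a b) = gfMul f (barShift v a) (barShift v b) := by
  rcases a with x | x <;> rcases b with y | y <;>
    simp [barShift, gfMul, pow_two, mul_comm, mul_left_comm]

end BarShift

theorem stmt_5_general {G : Type*} [CommGroup G] (f₂ : G ≃* G) (t u : G) (ht : t = u * u)
    (f₁ : G → G) (hf₁ : ∀ x : G, f₁ x = f₂ x * t) :
    ∃ φ : (G ⊕ G) ≃ (G ⊕ G), ∀ a b : G ⊕ G,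
      φ (gfMul f₁ a b) = gfMul (⇑f₂) (φ a) (φ b) := by
  set v := f₂.symm u
  have hf₁_shift : f₁ = fun x => f₂ (x * v ^ 2) := by
    funext x
    simp [hf₁, ht, v, pow_two]
  subst hf₁_shift
  exact ⟨barShift v, barShift_gfMul_mul_sq f₂ v⟩

theorem stmt_5 {G : Type*} [CommGroup G] (f₂ : G ≃* G) (t u : G) (ht : t = u * u)
    (f₁ : G → G) (hf₁ : ∀ x : G, f₁ x = f₂ x * t)
    (hna₁ : ¬ ∀ a b c : G ⊕ G, gfMul f₁ (gfMul f₁ a b) c = gfMul f₁ a (gfMul f₁ b c))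
    (hna₂ : ¬ ∀ a b c : G ⊕ G,
      gfMul (⇑f₂) (gfMul (⇑f₂) a b) c = gfMul (⇑f₂) a (gfMul (⇑f₂) b c)) :
    ∃ φ : (G ⊕ G) ≃ (G ⊕ G), ∀ a b : G ⊕ G,
      φ (gfMul f₁ a b) = gfMul (⇑f₂) (φ a) (φ b) :=
  stmt_5_general f₂ t u ht f₁ hf₁
end

section
/- Let G be a commutative group and f a bijection of G. Then f satisfies (i) f(xy) = f(x)f(y)f(1)⁻¹, (ii) f(x²) = x²f(1), and (iii) f(f(1)) = f(1)², for all x, y ∈ G, if and only if there exist g ∈ Aut(G) and t ∈ G such that f(x) = g(x)·t for all x, g(x²) = x² for all x ∈ G, and g(t) = t. -/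
/-!
Condition (i) says exactly that `x ↦ f x * (f 1)⁻¹` is a homomorphism, bijective together
with `f`; conditions (ii) and (iii) then say that it fixes all squares and `t = f 1`.
-/

section AffineMap

variable {G : Type*} [CommGroup G]

def linearPart (f : G → G) (hf : ∀ x y, f (x * y) = f x * f y * (f 1)⁻¹) : G →* G :=
  MonoidHom.mk' (fun x => f x * (f 1)⁻¹) fun x y => by
    rw [hf, mul_mul_mul_comm, ← mul_assoc]

@[simp]
theorem linearPart_apply (f : G → G) (hf : ∀ x y, f (x * y) = f x * f y * (f 1)⁻¹) (x : G) :
    linearPart f hf x = f x * (f 1)⁻¹ :=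
  rfl

theorem linearPart_bijective {f : G → G} (hf : ∀ x y, f (x * y) = f x * f y * (f 1)⁻¹)
    (hb : Function.Bijective f) : Function.Bijective (linearPart f hf) :=
  (Equiv.mulRight (f 1)⁻¹).bijective.comp hb

end AffineMap

theorem stmt_7 {G : Type*} [CommGroup G] (f : G → G) (hf : Function.Bijective f) :
    ((∀ x y : G, f (x * y) = f x * f y * (f 1)⁻¹) ∧
      (∀ x : G, f (x ^ 2) = x ^ 2 * f 1) ∧
      f (f 1) = (f 1) ^ 2) ↔
    (∃ (g : G ≃* G) (t : G), (∀ x : G, f x = g x * t) ∧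
      (∀ x : G, g (x ^ 2) = x ^ 2) ∧ g t = t) := by
  constructor
  · rintro ⟨hmul, hsq, hfix⟩
    refine ⟨MulEquiv.ofBijective _ (linearPart_bijective hmul hf), f 1, fun x => ?_, fun x => ?_, ?_⟩
    · simp
    · simp [hsq]
    · simp [hfix, sq]
  · rintro ⟨g, t, hft, hsq, hgt⟩
    have ht : f 1 = t := by simpa using hft 1
    refine ⟨fun x y => ?_, fun x => ?_, ?_⟩
    · rw [hft, hft, hft, ht, map_mul, ← mul_assoc, mul_inv_cancel_right, mul_right_comm]
    · rw [hft, hsq, ht]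
    · rw [ht, hft, hgt, sq]
end

section
/- Let G be a commutative group and f a bijection of G satisfying f(xy) = f(x)f(y)f(1)⁻¹ and f(x²) = x²f(1) for all x, y ∈ G. Then the identity f(f(x))²·f(x)⁻² = f(f(1)) holds for all x ∈ G if and only if f(f(1)) = f(1)². -/
/-! Putting `x = y` in the first identity and comparing with the second gives
`f(x)² = x² f(1)²`. Applied at `f(x)`, this shows that `f(f(x))² f(x)⁻²` is the constant `f(1)²`,
so the identity holds for all `x` exactly when that constant is `f(f(1))`. -/

section

variable {G : Type*} [CommGroup G] {f : G → G}

theorem sq_apply_eq_of_map_mul_of_map_sq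
    (h1 : ∀ x y : G, f (x * y) = f x * f y * (f 1)⁻¹)
    (h2 : ∀ x : G, f (x ^ 2) = x ^ 2 * f 1) (x : G) :
    f x ^ 2 = x ^ 2 * f 1 ^ 2 := by
  have hxx : x ^ 2 * f 1 = f x ^ 2 * (f 1)⁻¹ := by
    rw [← h2, pow_two, h1, pow_two]
  rw [mul_inv_eq_iff_eq_mul.mp hxx.symm, pow_two (f 1), mul_assoc]

theorem sq_apply_apply_mul_inv_sq_eq_of_map_mul_of_map_sq
    (h1 : ∀ x y : G, f (x * y) = f x * f y * (f 1)⁻¹)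
    (h2 : ∀ x : G, f (x ^ 2) = x ^ 2 * f 1) (x : G) :
    f (f x) ^ 2 * (f x)⁻¹ ^ 2 = f 1 ^ 2 := by
  rw [sq_apply_eq_of_map_mul_of_map_sq h1 h2, inv_pow, mul_right_comm, mul_inv_cancel, one_mul]

end

theorem stmt_8_general {G : Type*} [CommGroup G] (f : G → G)
    (h1 : ∀ x y : G, f (x * y) = f x * f y * (f 1)⁻¹)
    (h2 : ∀ x : G, f (x ^ 2) = x ^ 2 * f 1) :
    (∀ x : G, f (f x) ^ 2 * (f x)⁻¹ ^ 2 = f (f 1)) ↔ f (f 1) = (f 1) ^ 2 := by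
  have hconst := sq_apply_apply_mul_inv_sq_eq_of_map_mul_of_map_sq h1 h2
  constructor
  · intro h
    rw [← h 1, hconst 1]
  · intro h x
    rw [hconst x, h]

theorem stmt_8 {G : Type*} [CommGroup G] (f : G → G) (hf : Function.Bijective f)
    (h1 : ∀ x y : G, f (x * y) = f x * f y * (f 1)⁻¹)
    (h2 : ∀ x : G, f (x ^ 2) = x ^ 2 * f 1) :
    (∀ x : G, f (f x) ^ 2 * (f x)⁻¹ ^ 2 = f (f 1)) ↔ f (f 1) = (f 1) ^ 2 :=
  stmt_8_general f h1 h2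
end

section
/- Let V be a vector space over GF(2) of dimension at most 2, and let g : V³ → GF(2) be a trilinear form satisfying g(x,y,z) = g(z,y,x) for all x,y,z ∈ V. Then there exists a nonzero x ∈ V such that the induced bilinear form g(x,−,−) is symmetric. -/
/-!
The defect `g x y z - g x z y` is linear in `x`, and for a fixed `x` it vanishes identically as
soon as it vanishes on the pairs `(bᵢ, bⱼ)`, `i < j`, of basis vectors. So the `x` for which `g x`
is symmetric form the kernel of a linear map into a space of dimension `n(n-1)/2`, which is
smaller than `n = dim V` when `n ≤ 2`.
-/

namespace LinearMap

variable {ι : Type*} [LinearOrder ι]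

theorem forall_apply_comm_of_basis {R M : Type*} [CommSemiring R] [AddCommMonoid M] [Module R M]
    (b : Module.Basis ι R M) (B : M →ₗ[R] M →ₗ[R] R)
    (hB : ∀ i j, i < j → B (b i) (b j) = B (b j) (b i)) (y z : M) : B y z = B z y := by
  suffices B = B.flip from congr_fun₂ this y z
  refine ext_basis b b fun i j => ?_
  rcases lt_trichotomy i j with hij | rfl | hij
  · exact hB i j hij
  · rfl
  · exact (hB j i hij).symm

section CommRing

variable {R M : Type*} [CommRing R] [AddCommGroup M] [Module R M]

noncomputable def symmDefect (b : Module.Basis ι R M) (g : M →ₗ[R] M →ₗ[R] M →ₗ[R] R) :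
    M →ₗ[R] {p : ι × ι // p.1 < p.2} → R :=
  pi fun p => (g.flip (b p.1.1)).flip (b p.1.2) - (g.flip (b p.1.2)).flip (b p.1.1)

theorem apply_comm_of_mem_ker_symmDefect (b : Module.Basis ι R M)
    (g : M →ₗ[R] M →ₗ[R] M →ₗ[R] R) {x : M} (hx : x ∈ ker (symmDefect b g)) (y z : M) :
    g x y z = g x z y := by
  refine forall_apply_comm_of_basis b (g x) (fun i j hij => ?_) y z
  have := congrFun (mem_ker.mp hx) ⟨(i, j), hij⟩
  simpa [symmDefect, sub_eq_zero] using this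

end CommRing

theorem exists_ne_zero_forall_apply_comm {K V : Type*} [Field K] [AddCommGroup V] [Module K V]
    [Fintype ι] (b : Module.Basis ι K V) (g : V →ₗ[K] V →ₗ[K] V →ₗ[K] K)
    (hcard : Fintype.card {p : ι × ι // p.1 < p.2} < Fintype.card ι) :
    ∃ x : V, x ≠ 0 ∧ ∀ y z, g x y z = g x z y := by
  have := b.finiteDimensional_of_finite
  have hker : ker (symmDefect b g) ≠ ⊥ := ker_ne_bot_of_finrank_lt <| by
    rwa [Module.finrank_fintype_fun_eq_card, Module.finrank_eq_card_basis b]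
  obtain ⟨x, hx, hx0⟩ := Submodule.exists_mem_ne_zero_of_ne_bot hker
  exact ⟨x, hx0, apply_comm_of_mem_ker_symmDefect b g hx⟩

end LinearMap

theorem stmt_11_general (n : ℕ) (h1 : 1 ≤ n) (h2 : n ≤ 2)
    (g : (Fin n → ZMod 2) →ₗ[ZMod 2] (Fin n → ZMod 2) →ₗ[ZMod 2]
        (Fin n → ZMod 2) →ₗ[ZMod 2] ZMod 2) :
    ∃ x : Fin n → ZMod 2, x ≠ 0 ∧ ∀ y z : Fin n → ZMod 2, g x y z = g x z y := by
  refine LinearMap.exists_ne_zero_forall_apply_comm (Pi.basisFun (ZMod 2) (Fin n)) g ?_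
  interval_cases n <;> decide

theorem stmt_11 (n : ℕ) (h1 : 1 ≤ n) (h2 : n ≤ 2)
    (g : (Fin n → ZMod 2) →ₗ[ZMod 2] (Fin n → ZMod 2) →ₗ[ZMod 2]
        (Fin n → ZMod 2) →ₗ[ZMod 2] ZMod 2)
    (hsym : ∀ x y z : Fin n → ZMod 2, g x y z = g z y x) :
    ∃ x : Fin n → ZMod 2, x ≠ 0 ∧ ∀ y z : Fin n → ZMod 2, g x y z = g x z y :=
  stmt_11_general n h1 h2 g
end

section
/- Let R be a nonzero commutative ring, and define a multiplication on Q = R × R × R by (x₁,x₂,x₃)(y₁,y₂,y₃) = (x₁ + y₁ + (x₂+y₂)x₃y₃, x₂+y₂, x₃+y₃). Then Q is a commutative loop with neutral element (0,0,0), and every left inner mapping L_{y,x} : z ↦ (xy)\\(x(yz)) is given by L_{y,x}(z₁,z₂,z₃) = (z₁ + y₃(x₃z₂ − x₂z₃), z₂, z₃). -/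
/-- The multiplication of the loop `Ter(R)` on `R × R × R`. -/
def terMul {R : Type*} [CommRing R] (x y : R × R × R) : R × R × R :=
  (x.1 + y.1 + (x.2.1 + y.2.1) * x.2.2 * y.2.2, x.2.1 + y.2.1, x.2.2 + y.2.2)

section TerLoop

variable {R : Type*} [CommRing R]

theorem terMul_comm (x y : R × R × R) : terMul x y = terMul y x := by
  ext <;> simp only [terMul] <;> ring

theorem terMul_zero_left (x : R × R × R) : terMul (0, 0, 0) x = x := by
  simp [terMul]

/-- Left division `x \ y`, the unique solution `u` of `x · u = y`. -/
def terLeftDiv (x y : R × R × R) : R × R × R :=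
  (y.1 - x.1 - y.2.1 * x.2.2 * (y.2.2 - x.2.2), y.2.1 - x.2.1, y.2.2 - x.2.2)

theorem terMul_terLeftDiv (x y : R × R × R) : terMul x (terLeftDiv x y) = y := by
  ext <;> simp only [terMul, terLeftDiv] <;> ring

theorem terLeftDiv_terMul (x y : R × R × R) : terLeftDiv x (terMul x y) = y := by
  ext <;> simp only [terMul, terLeftDiv] <;> ring

theorem terMul_left_bijective (x : R × R × R) : Function.Bijective (terMul x) :=
  Function.bijective_iff_has_inverse.mpr
    ⟨terLeftDiv x, terLeftDiv_terMul x, terMul_terLeftDiv x⟩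

theorem terMul_right_bijective (x : R × R × R) :
    Function.Bijective (fun y => terMul y x) := by
  simpa only [terMul_comm _ x] using terMul_left_bijective x

/-- The closed form of the left inner mapping `L_{y,x}`. -/
def terLeftInner (y x z : R × R × R) : R × R × R :=
  (z.1 + y.2.2 * (x.2.2 * z.2.1 - x.2.1 * z.2.2), z.2.1, z.2.2)

theorem terLeftDiv_terMul_terMul (x y z : R × R × R) :
    terLeftDiv (terMul x y) (terMul x (terMul y z)) = terLeftInner y x z := by
  ext <;> simp only [terMul, terLeftDiv, terLeftInner] <;> ring

end TerLoop

theorem stmt_14_general (R : Type*) [CommRing R] :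
    (∀ x y : R × R × R, terMul x y = terMul y x) ∧
    (∀ x : R × R × R, terMul (0, 0, 0) x = x) ∧
    (∀ x : R × R × R, Function.Bijective (terMul x)) ∧
    (∀ x : R × R × R, Function.Bijective (fun y => terMul y x)) ∧
    (∀ x y z : R × R × R,
      terMul (terMul x y)
        (z.1 + y.2.2 * (x.2.2 * z.2.1 - x.2.1 * z.2.2), z.2.1, z.2.2) =
      terMul x (terMul y z)) := by
  refine ⟨terMul_comm, terMul_zero_left, terMul_left_bijective, terMul_right_bijective,
    fun x y z => ?_⟩
  rw [← terMul_terLeftDiv (terMul x y) (terMul x (terMul y z)), terLeftDiv_terMul_terMul]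
  rfl

theorem stmt_14 (R : Type*) [CommRing R] [Nontrivial R] :
    (∀ x y : R × R × R, terMul x y = terMul y x) ∧
    (∀ x : R × R × R, terMul (0, 0, 0) x = x) ∧
    (∀ x : R × R × R, Function.Bijective (terMul x)) ∧
    (∀ x : R × R × R, Function.Bijective (fun y => terMul y x)) ∧
    (∀ x y z : R × R × R,
      terMul (terMul x y)
        (z.1 + y.2.2 * (x.2.2 * z.2.1 - x.2.1 * z.2.2), z.2.1, z.2.2) =
      terMul x (terMul y z)) :=
  stmt_14_general R
end

section
/- Let R be a nonzero commutative ring and Q = Ter(R) the commutative A-loop on R³ with multiplication (x₁,x₂,x₃)(y₁,y₂,y₃) = (x₁ + y₁ + (x₂+y₂)x₃y₃, x₂+y₂, x₃+y₃). If there exist u, v ∈ R with uv ≠ 0 (e.g., R has a unit), then the middle nucleus of Q equals R × R × 0, the left nucleus and center both equal R × 0 × 0, and in particular Q is nonassociative. -/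
section

variable {R : Type*} [CommRing R]

lemma terMul_comm_s16 (a b : R × R × R) : terMul a b = terMul b a := by
  simp only [terMul, Prod.mk.injEq]
  exact ⟨by ring, by ring, by ring⟩

lemma terMul_assoc_iff (a b c : R × R × R) :
    terMul a (terMul b c) = terMul (terMul a b) c ↔
      c.2.1 * a.2.2 * b.2.2 = a.2.1 * b.2.2 * c.2.2 := by
  simp only [terMul, Prod.mk.injEq]
  constructor
  · rintro ⟨h1, -, -⟩
    linear_combination h1
  · intro h
    exact ⟨by linear_combination h, by ring, by ring⟩

lemma forall_terMul_assoc_middle_iff (b : R × R × R) :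
    (∀ a c : R × R × R, terMul a (terMul b c) = terMul (terMul a b) c) ↔ b.2.2 = 0 := by
  simp only [terMul_assoc_iff]
  refine ⟨fun hb => by simpa using hb (0, 0, 1) (0, 1, 0), fun hb a c => ?_⟩
  rw [hb]
  ring

lemma forall_terMul_assoc_left_iff (a : R × R × R) :
    (∀ b c : R × R × R, terMul a (terMul b c) = terMul (terMul a b) c) ↔
      a.2.1 = 0 ∧ a.2.2 = 0 := by
  simp only [terMul_assoc_iff]
  refine ⟨fun ha => ⟨?_, ?_⟩, fun ⟨h₂, h₃⟩ b c => ?_⟩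
  · simpa using (ha (0, 0, 1) (0, 0, 1)).symm
  · simpa using ha (0, 0, 1) (0, 1, 0)
  · rw [h₂, h₃]
    ring

lemma forall_terMul_assoc_right_iff (c : R × R × R) :
    (∀ a b : R × R × R, terMul a (terMul b c) = terMul (terMul a b) c) ↔
      c.2.1 = 0 ∧ c.2.2 = 0 := by
  simp only [terMul_assoc_iff]
  refine ⟨fun hc => ⟨?_, ?_⟩, fun ⟨h₂, h₃⟩ a b => ?_⟩
  · simpa using hc (0, 0, 1) (0, 0, 1)
  · simpa using (hc (0, 1, 0) (0, 0, 1)).symm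
  · rw [h₂, h₃]
    ring

end

theorem stmt_16_general (R : Type*) [CommRing R] [Nontrivial R] :
    -- the middle nucleus is R × R × 0
    ({b : R × R × R | ∀ a c : R × R × R,
        terMul a (terMul b c) = terMul (terMul a b) c} = {b | b.2.2 = 0}) ∧
    -- the left nucleus is R × 0 × 0
    ({a : R × R × R | ∀ b c : R × R × R,
        terMul a (terMul b c) = terMul (terMul a b) c} =
      {a | a.2.1 = 0 ∧ a.2.2 = 0}) ∧
    -- the center is R × 0 × 0
    ({a : R × R × R | (∀ b : R × R × R, terMul a b = terMul b a) ∧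
        (∀ b c : R × R × R, terMul a (terMul b c) = terMul (terMul a b) c) ∧
        (∀ b c : R × R × R, terMul b (terMul a c) = terMul (terMul b a) c) ∧
        (∀ b c : R × R × R, terMul b (terMul c a) = terMul (terMul b c) a)} =
      {a | a.2.1 = 0 ∧ a.2.2 = 0}) ∧
    -- Q is nonassociative
    ¬ ∀ a b c : R × R × R, terMul a (terMul b c) = terMul (terMul a b) c := by
  refine ⟨Set.ext forall_terMul_assoc_middle_iff, Set.ext forall_terMul_assoc_left_iff,
    Set.ext fun a => ⟨fun ha => (forall_terMul_assoc_left_iff a).1 ha.2.1, fun ha => ?_⟩,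
    fun hassoc => ?_⟩
  · exact ⟨fun b => terMul_comm_s16 a b, (forall_terMul_assoc_left_iff a).2 ha,
      (forall_terMul_assoc_middle_iff a).2 ha.2, (forall_terMul_assoc_right_iff a).2 ha⟩
  · have : (1 : R) = 0 :=
      (forall_terMul_assoc_middle_iff ((0, 0, 1) : R × R × R)).1 fun a c => hassoc a _ c
    exact one_ne_zero this

theorem stmt_16 (R : Type*) [CommRing R] [Nontrivial R]
    (h : ∃ u v : R, u * v ≠ 0) :
    -- the middle nucleus is R × R × 0
    ({b : R × R × R | ∀ a c : R × R × R,
        terMul a (terMul b c) = terMul (terMul a b) c} = {b | b.2.2 = 0}) ∧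
    -- the left nucleus is R × 0 × 0
    ({a : R × R × R | ∀ b c : R × R × R,
        terMul a (terMul b c) = terMul (terMul a b) c} =
      {a | a.2.1 = 0 ∧ a.2.2 = 0}) ∧
    -- the center is R × 0 × 0
    ({a : R × R × R | (∀ b : R × R × R, terMul a b = terMul b a) ∧
        (∀ b c : R × R × R, terMul a (terMul b c) = terMul (terMul a b) c) ∧
        (∀ b c : R × R × R, terMul b (terMul a c) = terMul (terMul b a) c) ∧
        (∀ b c : R × R × R, terMul b (terMul c a) = terMul (terMul b c) a)} =
      {a | a.2.1 = 0 ∧ a.2.2 = 0}) ∧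
    -- Q is nonassociative
    ¬ ∀ a b c : R × R × R, terMul a (terMul b c) = terMul (terMul a b) c :=
  stmt_16_general R
end

section
/- For an odd prime p and a, b ∈ Z_p, let Q = Terg(Z_p; a, b) be the loop on Z_p³ with multiplication (x₁,x₂,x₃)(y₁,y₂,y₃) = (x₁+y₁+(x₂+y₂)x₃y₃ + a(x₂,y₂)_p + b(x₃,y₃)_p, x₂+y₂, x₃+y₃), where (·,·)_p is the overflow indicator. Then for every m ≥ 0 and x = (x₁,x₂,x₃) ∈ Q, the m-th power of x is x^m = (m x₁ + 2·C(m+1,3)·x₂x₃² + a·t₂ + b·t₃, m x₂, m x₃), where tᵢ = Σ_{k=1}^{m−1} (xᵢ, k·xᵢ)_p. -/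
/-!
The last two coordinates of `Terg(Z_n; a, b)` multiply as in the group `(Z_n)²`, so the
`m`-th power has them equal to `m x₂, m x₃`. Multiplying `x^m` by `x` then adds to the first
coordinate `x₁ + (m + 1) m x₂ x₃²` plus the overflow terms `a (x₂, m x₂)_n + b (x₃, m x₃)_n`;
summing over the steps gives the formula, since `∑_{k<m} k (k + 1) = 2 C(m+1, 3)`.
-/

/-- The overflow indicator on `ZMod n`: `1` if the sum of the representatives
in `{0, …, n-1}` is at least `n`, `0` otherwise. -/
def ovf {n : ℕ} [NeZero n] (x y : ZMod n) : ℕ :=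
  if n ≤ x.val + y.val then 1 else 0

/-- The multiplication of the loop `Terg(Z_n; a, b)` on `(ZMod n)³`. -/
def tergMul {n : ℕ} [NeZero n] (a b : ZMod n)
    (x y : ZMod n × ZMod n × ZMod n) : ZMod n × ZMod n × ZMod n :=
  (x.1 + y.1 + (x.2.1 + y.2.1) * x.2.2 * y.2.2 + a * (ovf x.2.1 y.2.1 : ZMod n)
      + b * (ovf x.2.2 y.2.2 : ZMod n),
    x.2.1 + y.2.1, x.2.2 + y.2.2)

/-- `m`-th power in `Terg(Z_n; a, b)` (well defined by power-associativity). -/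
def tergPow {n : ℕ} [NeZero n] (a b : ZMod n)
    (x : ZMod n × ZMod n × ZMod n) : ℕ → ZMod n × ZMod n × ZMod n
  | 0 => (0, 0, 0)
  | m + 1 => tergMul a b x (tergPow a b x m)

lemma two_mul_choose_three_succ (m : ℕ) :
    2 * (m + 2).choose 3 = 2 * (m + 1).choose 3 + m * (m + 1) := by
  have hchoose2 : (m + 1).choose 2 * 2 = (m + 1) * m := by
    simpa using (Nat.add_one_mul_choose_eq m 1).symm
  rw [Nat.choose_succ_succ' (m + 1) 2]
  linarith

section Overflow

variable {n : ℕ} [NeZero n]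

lemma ovf_zero_right (x : ZMod n) : ovf x 0 = 0 := by
  simp [ovf, x.val_lt]

lemma sum_Icc_ovf_mul_succ (x : ZMod n) (m : ℕ) :
    ∑ k ∈ Finset.Icc 1 m, ovf x ((k : ZMod n) * x)
      = ∑ k ∈ Finset.Icc 1 (m - 1), ovf x ((k : ZMod n) * x) + ovf x ((m : ZMod n) * x) := by
  cases m with
  | zero => simp [ovf_zero_right]
  | succ m => simp [Finset.sum_Icc_succ_top]

end Overflow

section Powers

variable {n : ℕ} [NeZero n] (a b : ZMod n) (x : ZMod n × ZMod n × ZMod n)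

lemma tergPow_snd (m : ℕ) :
    (tergPow a b x m).2 = ((m : ZMod n) * x.2.1, (m : ZMod n) * x.2.2) := by
  induction m with
  | zero => simp [tergPow]
  | succ m ih =>
    simp only [tergPow, tergMul, ih, Nat.cast_succ, Prod.mk.injEq]
    constructor <;> ring

lemma tergPow_fst (m : ℕ) :
    (tergPow a b x m).1 =
      (m : ZMod n) * x.1 + 2 * ((m + 1).choose 3 : ZMod n) * x.2.1 * x.2.2 ^ 2
        + a * ((∑ k ∈ Finset.Icc 1 (m - 1), ovf x.2.1 ((k : ZMod n) * x.2.1) : ℕ) : ZMod n)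
        + b * ((∑ k ∈ Finset.Icc 1 (m - 1), ovf x.2.2 ((k : ZMod n) * x.2.2) : ℕ) : ZMod n) := by
  induction m with
  | zero => simp [tergPow, Nat.choose_eq_zero_of_lt]
  | succ m ih =>
    have hchoose : (2 : ZMod n) * ((m + 2).choose 3 : ℕ)
        = 2 * ((m + 1).choose 3 : ℕ) + m * (m + 1) := by
      exact_mod_cast congrArg (Nat.cast : ℕ → ZMod n) (two_mul_choose_three_succ m)
    simp only [tergPow, tergMul, ih, tergPow_snd, Nat.add_sub_cancel]
    rw [sum_Icc_ovf_mul_succ x.2.1 m, sum_Icc_ovf_mul_succ x.2.2 m]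
    push_cast
    linear_combination (-(x.2.1 * x.2.2 ^ 2)) * hchoose

end Powers

theorem stmt_17_general (p : ℕ) [NeZero p]
    (a b : ZMod p) (x : ZMod p × ZMod p × ZMod p) (m : ℕ) :
    tergPow a b x m =
      ((m : ZMod p) * x.1 + 2 * ((m + 1).choose 3 : ZMod p) * x.2.1 * x.2.2 ^ 2
          + a * ((∑ k ∈ Finset.Icc 1 (m - 1), ovf x.2.1 ((k : ZMod p) * x.2.1) : ℕ) : ZMod p)
          + b * ((∑ k ∈ Finset.Icc 1 (m - 1), ovf x.2.2 ((k : ZMod p) * x.2.2) : ℕ) : ZMod p),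
        (m : ZMod p) * x.2.1, (m : ZMod p) * x.2.2) :=
  Prod.ext (tergPow_fst a b x m) (tergPow_snd a b x m)

theorem stmt_17 (p : ℕ) [NeZero p] (hp : p.Prime) (hodd : Odd p)
    (a b : ZMod p) (x : ZMod p × ZMod p × ZMod p) (m : ℕ) :
    tergPow a b x m =
      ((m : ZMod p) * x.1 + 2 * ((m + 1).choose 3 : ZMod p) * x.2.1 * x.2.2 ^ 2
          + a * ((∑ k ∈ Finset.Icc 1 (m - 1), ovf x.2.1 ((k : ZMod p) * x.2.1) : ℕ) : ZMod p)
          + b * ((∑ k ∈ Finset.Icc 1 (m - 1), ovf x.2.2 ((k : ZMod p) * x.2.2) : ℕ) : ZMod p),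
        (m : ZMod p) * x.2.1, (m : ZMod p) * x.2.2) :=
  stmt_17_general p a b x m
end

section
/- Let p be an odd prime and a₁, a₂ ∈ Z_p^* such that a₁a₂⁻¹ is a quadratic residue mod p. Then the map φ(x₁,x₂,x₃) = (u²x₁, x₂, u x₃), where u² = a₂a₁⁻¹, is an isomorphism from Terg(Z_p; a₁, 0) to Terg(Z_p; a₂, 0). -/
/-!
Scaling the first coordinate by `u²` and the third by `u` multiplies the correction term
`(x₂ + y₂) x₃ y₃` by `u²` and leaves the second coordinate, hence its overflow, unchanged, so the
term `a (x₂, y₂)_p` becomes `u² a (x₂, y₂)_p`. The overflow of the third coordinate is not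
preserved by scaling, which is why `b = 0` is needed.
-/

def tergScale {R : Type*} [Monoid R] (u : R) (x : R × R × R) : R × R × R :=
  (u ^ 2 * x.1, x.2.1, u * x.2.2)

theorem tergScale_bijective {G₀ : Type*} [GroupWithZero G₀] {u : G₀} (hu : u ≠ 0) :
    Function.Bijective (tergScale u) :=
  (mulLeft_bijective₀ _ (pow_ne_zero 2 hu)).prodMap
    (Function.bijective_id.prodMap (mulLeft_bijective₀ u hu))

theorem tergScale_tergMul {n : ℕ} [NeZero n] (a u : ZMod n) (x y : ZMod n × ZMod n × ZMod n) :
    tergScale u (tergMul a 0 x y) = tergMul (u ^ 2 * a) 0 (tergScale u x) (tergScale u y) := by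
  simp only [tergScale, tergMul]
  exact Prod.ext (by ring) (Prod.ext rfl (mul_add u _ _))

theorem stmt_18_general (p : ℕ) [NeZero p] (hp : p.Prime)
    (a₁ a₂ : ZMod p) (ha₁ : a₁ ≠ 0) (ha₂ : a₂ ≠ 0)
    (u : ZMod p) (hu : u ^ 2 = a₂ * a₁⁻¹) :
    Function.Bijective
        (fun x : ZMod p × ZMod p × ZMod p => (u ^ 2 * x.1, x.2.1, u * x.2.2)) ∧
      ∀ x y : ZMod p × ZMod p × ZMod p,
        (fun x : ZMod p × ZMod p × ZMod p => (u ^ 2 * x.1, x.2.1, u * x.2.2))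
            (tergMul a₁ 0 x y) =
          tergMul a₂ 0
            ((u ^ 2 * x.1, x.2.1, u * x.2.2)) ((u ^ 2 * y.1, y.2.1, u * y.2.2)) := by
  have : Fact p.Prime := ⟨hp⟩
  have hu0 : u ≠ 0 := by
    rintro rfl
    simp_all
  have hua : u ^ 2 * a₁ = a₂ := by
    rw [hu, mul_assoc, inv_mul_cancel₀ ha₁, mul_one]
  exact ⟨tergScale_bijective hu0, hua ▸ tergScale_tergMul a₁ u⟩

theorem stmt_18 (p : ℕ) [NeZero p] (hp : p.Prime) (hodd : Odd p)
    (a₁ a₂ : ZMod p) (ha₁ : a₁ ≠ 0) (ha₂ : a₂ ≠ 0)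
    (u : ZMod p) (hu : u ^ 2 = a₂ * a₁⁻¹) :
    Function.Bijective
        (fun x : ZMod p × ZMod p × ZMod p => (u ^ 2 * x.1, x.2.1, u * x.2.2)) ∧
      ∀ x y : ZMod p × ZMod p × ZMod p,
        (fun x : ZMod p × ZMod p × ZMod p => (u ^ 2 * x.1, x.2.1, u * x.2.2))
            (tergMul a₁ 0 x y) =
          tergMul a₂ 0
            ((u ^ 2 * x.1, x.2.1, u * x.2.2)) ((u ^ 2 * y.1, y.2.1, u * y.2.2)) :=
  stmt_18_general p hp a₁ a₂ ha₁ ha₂ u hu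
end
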